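/- Let N ≥ 2 be even and let h₁ be the N×N real symmetric tridiagonal 'standard perfect state transfer' matrix with zero diagonal and off-diagonal entries (h₁)_{n,n+1} = (h₁)_{n+1,n} = √(n(N−n)) for n = 1,…,N−1. Let D̃ be the diagonal matrix whose first N/2 diagonal entries are −1 and whose last N/2 diagonal entries are +1, and set R = exp(i(π/4)h₁) · D̃ · exp(−i(π/4)h₁). Then R_{n,m} = 0 whenever n and m have the same parity (n ≡ m mod 2). -/

import Mathlib

/-!
With `P = diag((-1)^n)`, the chain `h₁` is bipartite, `P h₁ = -h₁ P`, so
`P R P = exp(-iπ/4 h₁) D̃ exp(iπ/4 h₁)`, and this equals `-R` as soon as `D̃` anticommutes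
with the transfer operator `V = exp(iπ/2 h₁)`. In the spin-`(N-1)/2` representation
`h₁ = 2Jₓ`, and the ladder combinations `J_z ± iJ_y` are eigenvectors of `ad h₁` with
eigenvalues `±2`; as `e^{±iπ} = -1`, `V` anticommutes with both, hence with
`2J_z = diag(2n + 1 - N)`. So `V` lives on the antidiagonal `n + m + 1 = N`, across which `D̃`
changes sign because `N` is even. Finally `P R P = -R` forces `R n m = 0` whenever
`(-1)^n = (-1)^m`.
-/

open Matrix NormedSpace

namespace Matrix

variable {m R : Type*} [Fintype m] [DecidableEq m]

theorem semiconjBy_exp {x a b : Matrix m m ℂ} (h : SemiconjBy x a b) :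
    SemiconjBy x (exp a) (exp b) :=
  open scoped Norms.Operator in h.exp_right

theorem exp_smul_mul_exp_smul (a b : ℂ) (A : Matrix m m ℂ) :
    exp (a • A) * exp (b • A) = exp ((a + b) • A) := by
  rw [add_smul, exp_add_of_commute _ _ (((Commute.refl A).smul_left a).smul_right b)]

theorem exp_mul_of_mul_sub_mul_eq_smul {a x : Matrix m m ℂ} {μ : ℂ}
    (h : a * x - x * a = μ • x) : exp a * x = Complex.exp μ • (x * exp a) := by
  have hsemi : SemiconjBy x (a + μ • 1) a := by
    rw [SemiconjBy, mul_add, mul_smul_one, ← h]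
    abel
  have hexp : exp (μ • (1 : Matrix m m ℂ)) = Complex.exp μ • 1 := by
    rw [← diagonal_one, ← diagonal_smul, exp_diagonal, ← diagonal_smul]
    congr 1
    ext
    simp [Complex.exp_eq_exp_ℂ]
  have := semiconjBy_exp hsemi
  rw [exp_add_of_commute _ _ ((Commute.one_right a).smul_right μ), hexp] at this
  rw [← this, mul_smul_one, mul_smul_comm]

variable [CommRing R]

theorem diagonal_mul_sub_mul_diagonal {d : m → R} {M : Matrix m m R} {μ : R}
    (h : ∀ i j, M i j ≠ 0 → d i - d j = μ) :
    diagonal d * M - M * diagonal d = μ • M := by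
  ext i j
  rw [sub_apply, diagonal_mul, mul_diagonal, smul_apply, smul_eq_mul]
  by_cases hij : M i j = 0
  · simp [hij]
  · rw [← h i j hij]
    ring

theorem diagonal_mul_eq_neg_mul_diagonal_iff [NoZeroDivisors R] {d : m → R}
    {M : Matrix m m R} :
    diagonal d * M = -(M * diagonal d) ↔ ∀ i j, M i j ≠ 0 → d i = -d j := by
  simp only [← ext_iff, diagonal_mul, mul_diagonal, neg_apply]
  refine forall₂_congr fun i j => ?_
  rw [show d i * M i j = -(M i j * d j) ↔ M i j * (d i + d j) = 0 by
    constructor <;> intro h <;> linear_combination h, mul_eq_zero, eq_neg_iff_add_eq_zero,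
    or_iff_not_imp_left]

end Matrix

namespace Fin

variable {N : ℕ} {M : Type*} [AddCommMonoid M]

theorem sum_ite_val_eq (a : ℕ) (f : Fin N → M) :
    (∑ k : Fin N, if a = k then f k else 0) = if h : a < N then f ⟨a, h⟩ else 0 := by
  split_ifs with h
  · rw [Fintype.sum_eq_single ⟨a, h⟩ fun k hk => if_neg fun hak => hk (Fin.ext hak.symm)]
    exact if_pos rfl
  · exact Finset.sum_eq_zero fun k _ => if_neg fun (hak : a = k) => h (hak ▸ k.isLt)

theorem sum_ite_val_add_one_eq (a : ℕ) (f : Fin N → M) :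
    (∑ k : Fin N, if (k : ℕ) + 1 = a then f k else 0) =
      if h : 0 < a ∧ a ≤ N then f ⟨a - 1, by omega⟩ else 0 := by
  split_ifs with h
  · rw [Fintype.sum_eq_single ⟨a - 1, by omega⟩
      fun k hk => if_neg fun hak => hk (Fin.ext (by simp; omega))]
    exact if_pos (by simp; omega)
  · exact Finset.sum_eq_zero fun k _ => if_neg fun hak => h (by omega)

end Fin

namespace Matrix

variable {R : Type*} [CommRing R]

/-- The weight `c j` sits at position `(j - 1, j)`, matching the paper's 1-based `J_j`. -/
def superdiag (N : ℕ) (c : ℕ → R) : Matrix (Fin N) (Fin N) R :=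
  of fun i j => if (i : ℕ) + 1 = j then c j else 0

variable {N : ℕ} {c : ℕ → R}

theorem superdiag_apply_ne_zero {i j : Fin N} (h : superdiag N c i j ≠ 0) :
    (i : ℕ) + 1 = j := by
  by_contra hij
  exact h (if_neg hij)

theorem superdiag_mul_transpose (hc : c N = 0) :
    superdiag N c * (superdiag N c)ᵀ = diagonal fun i : Fin N => c (i + 1) * c (i + 1) := by
  ext i j
  simp only [mul_apply, transpose_apply, superdiag, of_apply, ite_mul, zero_mul,
    Fin.sum_ite_val_eq]
  rw [diagonal_apply]
  split_ifs <;> simp_all [Fin.ext_iff]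
  rw [show (j : ℕ) + 1 = N by omega, hc, mul_zero]

theorem transpose_mul_superdiag (hc : c 0 = 0) :
    (superdiag N c)ᵀ * superdiag N c = diagonal fun i : Fin N => c i * c i := by
  ext i j
  simp only [mul_apply, transpose_apply, superdiag, of_apply, ite_mul, zero_mul,
    Fin.sum_ite_val_add_one_eq]
  rw [diagonal_apply]
  split_ifs <;> simp_all [Fin.ext_iff] <;> omega

end Matrix

/-- The hypotheses say that `(-d, e, f)` is an `sl₂`-triple. -/
theorem commutator_eq_smul_of_sl2 {𝕜 A : Type*} [CommRing 𝕜] [Ring A] [Algebra 𝕜 A]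
    {d e f : A} (hde : d * e - e * d = (-2 : 𝕜) • e) (hdf : d * f - f * d = (2 : 𝕜) • f)
    (hef : e * f - f * e = -d) :
    (e + f) * (d + (e - f)) - (d + (e - f)) * (e + f) = (2 : 𝕜) • (d + (e - f)) ∧
      (e + f) * (d - (e - f)) - (d - (e - f)) * (e + f) = (-2 : 𝕜) • (d - (e - f)) := by
  constructor
  · calc _ = -(d * e - e * d) - (d * f - f * d) - 2 • (e * f - f * e) := by noncomm_ring
      _ = _ := by rw [hde, hdf, hef]; module
  · calc _ = -(d * e - e * d) - (d * f - f * d) + 2 • (e * f - f * e) := by noncomm_ring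
      _ = _ := by rw [hde, hdf, hef]; module

theorem mul_conj_eq_neg_conj_mul {A : Type*} [Ring A] {P U U' X : A} (hU : U * U' = 1)
    (hU' : U' * U = 1) (hPU : P * U = U' * P) (hPU' : P * U' = U * P) (hPX : P * X = X * P)
    (hX : X * (U * U) = -(U * U * X)) :
    P * (U * X * U') = -(U * X * U' * P) := by
  have hconj : U' * X * U = -(U * X * U') :=
    calc U' * X * U = U' * X * U * (U * U') := by rw [hU, mul_one]
      _ = U' * (X * (U * U)) * U' := by noncomm_ring
      _ = -(U' * U * (U * X * U')) := by rw [hX]; noncomm_ring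
      _ = _ := by rw [hU', one_mul]
  calc P * (U * X * U') = U' * X * U * P := by
        rw [← mul_assoc, ← mul_assoc, hPU, mul_assoc U', hPX, ← mul_assoc, mul_assoc _ P, hPU',
          ← mul_assoc]
    _ = _ := by rw [hconj, neg_mul]

namespace SpinChain

variable {N : ℕ} {c : ℕ → ℂ}

/-- The diagonal of `2J_z` in the spin-`(N-1)/2` representation. -/
def weight (N : ℕ) (i : Fin N) : ℂ := 2 * (i : ℂ) + 1 - N

def hamiltonian (N : ℕ) (c : ℕ → ℂ) : Matrix (Fin N) (Fin N) ℂ :=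
  superdiag N c + (superdiag N c)ᵀ

noncomputable def pstCoupling (N j : ℕ) : ℂ := ((Real.sqrt ((j * (N - j) : ℕ)) : ℝ) : ℂ)

theorem pstCoupling_mul_self {j : ℕ} (hj : j ≤ N) :
    pstCoupling N j * pstCoupling N j = j * (N - j) := by
  rw [pstCoupling, ← Complex.ofReal_mul, Real.mul_self_sqrt (Nat.cast_nonneg _)]
  push_cast [Nat.cast_sub hj]
  rfl

theorem hamiltonian_pstCoupling (N : ℕ) :
    hamiltonian N (pstCoupling N) = of fun i j : Fin N =>
      if (i : ℕ) + 1 = (j : ℕ) then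
        ((Real.sqrt ((((i : ℕ) + 1) * (N - ((i : ℕ) + 1)) : ℕ)) : ℝ) : ℂ)
      else if (j : ℕ) + 1 = (i : ℕ) then
        ((Real.sqrt ((((j : ℕ) + 1) * (N - ((j : ℕ) + 1)) : ℕ)) : ℝ) : ℂ)
      else 0 := by
  ext i j
  rw [hamiltonian, Matrix.add_apply, transpose_apply]
  simp only [superdiag, of_apply]
  split_ifs with hij hji hji
  · omega
  · rw [← hij, add_zero]; rfl
  · rw [← hji, zero_add]; rfl
  · rw [add_zero]

theorem diagonal_weight_mul_sub_superdiag :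
    diagonal (weight N) * superdiag N c - superdiag N c * diagonal (weight N) =
      (-2 : ℂ) • superdiag N c :=
  diagonal_mul_sub_mul_diagonal fun i j h => by
    rw [weight, weight, ← superdiag_apply_ne_zero h]
    push_cast
    ring

theorem diagonal_weight_mul_sub_transpose_superdiag :
    diagonal (weight N) * (superdiag N c)ᵀ - (superdiag N c)ᵀ * diagonal (weight N) =
      (2 : ℂ) • (superdiag N c)ᵀ :=
  diagonal_mul_sub_mul_diagonal fun i j h => by
    rw [weight, weight, ← superdiag_apply_ne_zero h]
    push_cast
    ring

theorem superdiag_mul_transpose_sub (hc : ∀ j ≤ N, c j * c j = j * (N - j)) :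
    superdiag N c * (superdiag N c)ᵀ - (superdiag N c)ᵀ * superdiag N c =
      -diagonal (weight N) := by
  have hc₀ : c 0 = 0 := mul_self_eq_zero.mp (by simpa using hc 0 (Nat.zero_le N))
  have hcN : c N = 0 := mul_self_eq_zero.mp (by simpa using hc N le_rfl)
  rw [superdiag_mul_transpose hcN, transpose_mul_superdiag hc₀, diagonal_sub, diagonal_neg]
  congr 1
  funext i
  rw [hc _ i.isLt, hc _ i.isLt.le, weight]
  push_cast
  ring

theorem diagonal_neg_one_pow_mul_hamiltonian :
    diagonal (fun i : Fin N => (-1 : ℂ) ^ (i : ℕ)) * hamiltonian N c =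
      -(hamiltonian N c * diagonal fun i : Fin N => (-1 : ℂ) ^ (i : ℕ)) := by
  refine diagonal_mul_eq_neg_mul_diagonal_iff.mpr fun i j h => ?_
  have hadj : superdiag N c i j ≠ 0 ∨ superdiag N c j i ≠ 0 := by
    by_contra! h'
    simp [hamiltonian, h'.1, h'.2] at h
  rcases hadj with h | h
  · rw [← superdiag_apply_ne_zero h, pow_succ]
    ring
  · rw [← superdiag_apply_ne_zero h, pow_succ]
    ring

theorem diagonal_weight_mul_exp_hamiltonian (hc : ∀ j ≤ N, c j * c j = j * (N - j)) :
    diagonal (weight N) * exp ((Complex.I * (Real.pi / 2)) • hamiltonian N c) =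
      -(exp ((Complex.I * (Real.pi / 2)) • hamiltonian N c) * diagonal (weight N)) := by
  set V := exp ((Complex.I * (Real.pi / 2)) • hamiltonian N c)
  have hanti (w : Matrix (Fin N) (Fin N) ℂ) (ν : ℂ)
      (hw : hamiltonian N c * w - w * hamiltonian N c = ν • w)
      (hν : Complex.exp (Complex.I * (Real.pi / 2) * ν) = -1) : V * w = -(w * V) := by
    refine (exp_mul_of_mul_sub_mul_eq_smul ?_).trans (by rw [hν, neg_one_smul])
    rw [smul_mul_assoc, mul_smul_comm, ← smul_sub, hw, smul_smul]
  obtain ⟨hplus, hminus⟩ := commutator_eq_smul_of_sl2 diagonal_weight_mul_sub_superdiag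
    diagonal_weight_mul_sub_transpose_superdiag (superdiag_mul_transpose_sub hc)
  have hVplus := hanti _ _ hplus (by rw [← Complex.exp_pi_mul_I]; ring_nf)
  have hVminus := hanti _ _ hminus (by rw [← Complex.exp_neg_pi_mul_I]; ring_nf)
  have hd : diagonal (weight N) = (2 : ℂ)⁻¹ •
      ((diagonal (weight N) + (superdiag N c - (superdiag N c)ᵀ)) +
        (diagonal (weight N) - (superdiag N c - (superdiag N c)ᵀ))) := by module
  rw [hd, smul_mul_assoc, mul_smul_comm, add_mul, mul_add, hVplus, hVminus]
  module

theorem exp_half_pi_hamiltonian_apply_eq_zero (hc : ∀ j ≤ N, c j * c j = j * (N - j))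
    {i j : Fin N} (hij : (i : ℕ) + j + 1 ≠ N) :
    exp ((Complex.I * (Real.pi / 2)) • hamiltonian N c) i j = 0 := by
  by_contra h
  have := diagonal_mul_eq_neg_mul_diagonal_iff.mp (diagonal_weight_mul_exp_hamiltonian hc) i j h
  rw [weight, weight] at this
  have hsum : ((i + j + 1 : ℕ) : ℂ) = N := by
    push_cast
    linear_combination this / 2
  exact hij (by exact_mod_cast hsum)

end SpinChain

theorem diagonal_halfSigns_mul_eq_neg_of_antidiagonal {N : ℕ} (hN : Even N)
    {M : Matrix (Fin N) (Fin N) ℂ} (hM : ∀ i j : Fin N, (i : ℕ) + j + 1 ≠ N → M i j = 0) :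
    diagonal (fun n : Fin N => if (n : ℕ) < N / 2 then (-1 : ℂ) else 1) * M =
      -(M * diagonal fun n : Fin N => if (n : ℕ) < N / 2 then (-1 : ℂ) else 1) := by
  refine diagonal_mul_eq_neg_mul_diagonal_iff.mpr fun i j h => ?_
  have hij : (i : ℕ) + j + 1 = N := by_contra fun hij => h (hM i j hij)
  obtain ⟨k, rfl⟩ := hN
  split_ifs <;> norm_num <;> omega

open SpinChain in
theorem stmt5_general (N : ℕ) (hNeven : Even N)
    (h₁ : Matrix (Fin N) (Fin N) ℂ)
    (hh₁ : h₁ = Matrix.of fun i j : Fin N =>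
      if (i : ℕ) + 1 = (j : ℕ) then
        ((Real.sqrt ((((i : ℕ) + 1) * (N - ((i : ℕ) + 1)) : ℕ)) : ℝ) : ℂ)
      else if (j : ℕ) + 1 = (i : ℕ) then
        ((Real.sqrt ((((j : ℕ) + 1) * (N - ((j : ℕ) + 1)) : ℕ)) : ℝ) : ℂ)
      else 0)
    (Dt : Matrix (Fin N) (Fin N) ℂ)
    (hDt : Dt = Matrix.diagonal fun n : Fin N => if (n : ℕ) < N / 2 then (-1 : ℂ) else 1)
    (R : Matrix (Fin N) (Fin N) ℂ)
    (hR : R = NormedSpace.exp ((Complex.I * ((Real.pi : ℂ) / 4)) • h₁) * Dt *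
      NormedSpace.exp ((-Complex.I * ((Real.pi : ℂ) / 4)) • h₁)) :
    ∀ n m : Fin N, (n : ℕ) % 2 = (m : ℕ) % 2 → R n m = 0 := by
  have hH : h₁ = hamiltonian N (pstCoupling N) := hh₁.trans (hamiltonian_pstCoupling N).symm
  set P := diagonal fun i : Fin N => (-1 : ℂ) ^ (i : ℕ)
  have hexp (a b : ℂ) := exp_smul_mul_exp_smul a b h₁
  have hP (a : ℂ) : P * exp (a • h₁) = exp ((-a) • h₁) * P := by
    refine semiconjBy_exp ?_
    rw [SemiconjBy, mul_smul_comm, hH, diagonal_neg_one_pow_mul_hamiltonian, smul_neg,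
      ← neg_smul, smul_mul_assoc]
  have hPR : P * R = -(R * P) := by
    rw [hR, neg_mul]
    refine mul_conj_eq_neg_conj_mul ?_ ?_ (hP _) (by rw [hP, neg_neg]) ?_ ?_
    · rw [hexp, add_neg_cancel, zero_smul, exp_zero]
    · rw [hexp, neg_add_cancel, zero_smul, exp_zero]
    · rw [hDt]
      exact commute_diagonal _ _
    · rw [hexp, show Complex.I * (Real.pi / 4) + Complex.I * (Real.pi / 4) =
        Complex.I * (Real.pi / 2) by ring, hDt, hH]
      exact diagonal_halfSigns_mul_eq_neg_of_antidiagonal hNeven fun i j =>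
        exp_half_pi_hamiltonian_apply_eq_zero fun j hj => pstCoupling_mul_self hj
  intro n m hnm
  by_contra hne
  have hsign := diagonal_mul_eq_neg_mul_diagonal_iff.mp hPR n m hne
  rw [neg_one_pow_eq_pow_mod_two, neg_one_pow_eq_pow_mod_two (n := (m : ℕ)), hnm,
    self_eq_neg] at hsign
  exact pow_ne_zero _ (neg_ne_zero.mpr one_ne_zero) hsign

/-- claim established inside the proof of the paper's Lemma 3.
For the standard perfect state transfer chain of even length `N` (zero diagonal,
couplings `J_n = √(n(N-n))`), the matrix `R = exp(i (π/4) h₁) · D̃ · exp(-i (π/4) h₁)`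
vanishes at every entry `(n, m)` with `n ≡ m (mod 2)`, where `D̃` is the diagonal matrix
whose first `N/2` entries are `-1` and last `N/2` entries are `+1`. -/
theorem stmt5 (N : ℕ) (hN : 2 ≤ N) (hNeven : Even N)
    (h₁ : Matrix (Fin N) (Fin N) ℂ)
    (hh₁ : h₁ = Matrix.of fun i j : Fin N =>
      if (i : ℕ) + 1 = (j : ℕ) then
        ((Real.sqrt ((((i : ℕ) + 1) * (N - ((i : ℕ) + 1)) : ℕ)) : ℝ) : ℂ)
      else if (j : ℕ) + 1 = (i : ℕ) then
        ((Real.sqrt ((((j : ℕ) + 1) * (N - ((j : ℕ) + 1)) : ℕ)) : ℝ) : ℂ)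
      else 0)
    (Dt : Matrix (Fin N) (Fin N) ℂ)
    (hDt : Dt = Matrix.diagonal fun n : Fin N => if (n : ℕ) < N / 2 then (-1 : ℂ) else 1)
    (R : Matrix (Fin N) (Fin N) ℂ)
    (hR : R = NormedSpace.exp ((Complex.I * ((Real.pi : ℂ) / 4)) • h₁) * Dt *
      NormedSpace.exp ((-Complex.I * ((Real.pi : ℂ) / 4)) • h₁)) :
    ∀ n m : Fin N, (n : ℕ) % 2 = (m : ℕ) % 2 → R n m = 0 :=
  stmt5_general N hNeven h₁ hh₁ Dt hDt R hR
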